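/- arXiv:1312.4173 — 2 statements merged into one kernel-verified Lean document; each statement's English description precedes it below -/
import Mathlib

section
/- Consider the polymer-representation state ω₀ on the Weyl-type algebra generated by W(λδ_x, f) with relations W(λδ_x, f)W(λ'δ_{x'}, f') = exp(−(i/2)(λ f'(x) − λ' f(x'))) W(λδ_x + λ'δ_{x'}, f + f') and ω₀(W(Σᵢ λᵢ δ_{xᵢ}, f)) = Πᵢ 𝟙[λᵢ = 0] for mutually distinct xᵢ. Then ω₀ is normalized (ω₀(W(0,0)) = 1), invariant under f ↦ f + f' translations in the second slot in the sense that ω₀(W(Σᵢ λᵢ δ_{xᵢ}, f)) is independent of f, and ω₀ is a well-defined positive state: for any finite collection of algebra elements a = Σ_j c_j W(Σᵢ λ_{ij} δ_{x_i}, f_j), ω₀(a* a) ≥ 0. -/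
open scoped BigOperators
open Classical

/-- Generators of the polymer Weyl algebra: pairs `(a, f)` with `a = Σᵢ λᵢ δ_{xᵢ}`
a finitely supported real function on `S` and `f` a (test) function on `S`. -/
abbrev PolymerGen (S : Type*) := (S →₀ ℝ) × (S → ℝ)

/-- Symplectic form `σ((Σλᵢδ_{xᵢ}, f),(Σλ'ᵢδ_{x'ᵢ}, f')) = Σᵢ λᵢ f'(xᵢ) − Σᵢ λ'ᵢ f(x'ᵢ)`. -/
noncomputable def polymerSigma {S : Type*} (v w : PolymerGen S) : ℝ :=
  (v.1.sum fun x lam => lam * w.2 x) - (w.1.sum fun x lam => lam * v.2 x)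

/-- The polymer state on Weyl generators: `ω₀(W(a,f)) = 1` if `a = 0`, else `0`. -/

noncomputable def polymerState {S : Type*} (v : PolymerGen S) : ℂ :=
  if v.1 = 0 then 1 else 0

/-- The polymer-representation state `ω₀` with
`ω₀(W(Σᵢλᵢδ_{xᵢ}, f)) = Πᵢ 𝟙[λᵢ = 0]` for mutually distinct `xᵢ` is normalized
(`ω₀(W(0,0)) = 1`), independent of the second slot `f`, and positive: for any
finite collection `a = Σ_j c_j W(v_j)` of algebra elements, using the Weyl
relations `W(v)* W(w) = e^{(i/2)σ(v,w)} W(w − v)`, one has `ω₀(a*a) ≥ 0`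
(the value is a nonnegative real). -/
theorem polymer_state_is_state {S : Type*} :
    (polymerState ((0 : S →₀ ℝ), (0 : S → ℝ)) = 1) ∧
    (∀ (a : S →₀ ℝ) (f f' : S → ℝ), polymerState (a, f) = polymerState (a, f')) ∧
    (∀ (n : ℕ) (x : Fin n → S), Function.Injective x → ∀ (lam : Fin n → ℝ)
        (f : S → ℝ),
      polymerState (∑ i, Finsupp.single (x i) (lam i), f) =
        ∏ i, (if lam i = 0 then (1 : ℂ) else 0)) ∧
    (∀ (N : ℕ) (c : Fin N → ℂ) (v : Fin N → PolymerGen S),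
      0 ≤ (∑ j, ∑ k, (starRingEnd ℂ) (c j) * c k *
            Complex.exp ((Complex.I / 2) * (polymerSigma (v j) (v k) : ℂ)) *
            polymerState (v k - v j)).re ∧
      (∑ j, ∑ k, (starRingEnd ℂ) (c j) * c k *
            Complex.exp ((Complex.I / 2) * (polymerSigma (v j) (v k) : ℂ)) *
            polymerState (v k - v j)).im = 0) := by
  refine ⟨by simp [polymerState], fun a f f' => rfl, ?_, ?_⟩
  · intro n x hx lam f
    rw [Finset.prod_boole]
    simp only [polymerState]
    congr 1
    simp only [eq_iff_iff]
    constructor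
    · intro h i _
      have h2 := DFunLike.congr_fun h (x i)
      rw [Finsupp.finset_sum_apply] at h2
      simp only [Finsupp.single_apply, hx.eq_iff, Finset.sum_ite_eq',
        Finset.mem_univ, if_pos, Finsupp.coe_zero, Pi.zero_apply] at h2
      exact h2
    · intro h
      exact Finset.sum_eq_zero fun i _ => by
        rw [h i (Finset.mem_univ i), Finsupp.single_zero]
  · intro N c v
    set t : Fin N → ℝ := fun j => ((v j).1).sum fun x lam => lam * (v j).2 x with ht
    set d : Fin N → ℂ := fun j => c j * Complex.exp ((Complex.I/2) * (t j : ℂ)) with hd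
    have key : ∀ j k, (starRingEnd ℂ) (c j) * c k *
          Complex.exp ((Complex.I / 2) * (polymerSigma (v j) (v k) : ℂ)) *
          polymerState (v k - v j)
        = if (v k).1 = (v j).1 then (starRingEnd ℂ) (d j) * d k else 0 := by
      intro j k
      by_cases h : (v k).1 = (v j).1
      · rw [if_pos h]
        have hps : polymerState (v k - v j) = 1 := by
          simp [polymerState, Prod.fst_sub, sub_eq_zero, h]
        have hσ : polymerSigma (v j) (v k) = t k - t j := by
          have h1 : t k = ((v j).1).sum fun x lam => lam * (v k).2 x := by
            rw [ht]; simp only; rw [h]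
          have h2 : t j = ((v k).1).sum fun x lam => lam * (v j).2 x := by
            rw [ht]; simp only; rw [h]
          rw [h1, h2]; rfl
        rw [hps, mul_one, hσ, hd]
        simp only [map_mul, ← Complex.exp_conj, map_div₀, Complex.conj_I,
          Complex.conj_ofReal, map_ofNat, Complex.ofReal_sub]
        rw [show Complex.I / 2 * ((t k : ℂ) - (t j : ℂ))
            = -Complex.I / 2 * (t j : ℂ) + Complex.I / 2 * (t k : ℂ) by ring,
          Complex.exp_add]
        ring
      · rw [if_neg h]
        have hps : polymerState (v k - v j) = 0 := by
          simp [polymerState, Prod.fst_sub, sub_eq_zero, h]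
        rw [hps, mul_zero]
    set T : Finset (S →₀ ℝ) := Finset.univ.image fun j => (v j).1 with hT
    set F : (S →₀ ℝ) → ℂ := fun a => ∑ j, if (v j).1 = a then d j else 0 with hF
    have hTsum : ∀ j k : Fin N,
        (∑ a ∈ T, (if (v j).1 = a then (starRingEnd ℂ) (d j) else 0)
          * (if (v k).1 = a then d k else 0))
        = if (v k).1 = (v j).1 then (starRingEnd ℂ) (d j) * d k else 0 := by
      intro j k
      by_cases h : (v k).1 = (v j).1
      · rw [if_pos h, Finset.sum_eq_single ((v j).1)]
        · rw [if_pos rfl, if_pos h]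
        · intro b _ hb
          rw [if_neg (fun hh => hb hh.symm), zero_mul]
        · intro habs
          exact absurd (Finset.mem_image_of_mem _ (Finset.mem_univ j)) habs
      · rw [if_neg h]
        refine Finset.sum_eq_zero fun a _ => ?_
        split_ifs with h1 h2
        · exact absurd (h2.trans h1.symm) h
        · exact mul_zero _
        · exact zero_mul _
        · exact zero_mul _
    have main : (∑ j, ∑ k, (starRingEnd ℂ) (c j) * c k *
            Complex.exp ((Complex.I / 2) * (polymerSigma (v j) (v k) : ℂ)) *
            polymerState (v k - v j))
        = ((∑ a ∈ T, Complex.normSq (F a) : ℝ) : ℂ) := by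
      calc (∑ j, ∑ k, (starRingEnd ℂ) (c j) * c k *
            Complex.exp ((Complex.I / 2) * (polymerSigma (v j) (v k) : ℂ)) *
            polymerState (v k - v j))
          = ∑ j, ∑ k, ∑ a ∈ T,
              (if (v j).1 = a then (starRingEnd ℂ) (d j) else 0)
                * (if (v k).1 = a then d k else 0) := by
            simp only [key, hTsum]
        _ = ∑ j, ∑ a ∈ T, ∑ k,
              (if (v j).1 = a then (starRingEnd ℂ) (d j) else 0)
                * (if (v k).1 = a then d k else 0) :=
            Finset.sum_congr rfl fun j _ => Finset.sum_comm
        _ = ∑ a ∈ T, ∑ j, ∑ k,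
              (if (v j).1 = a then (starRingEnd ℂ) (d j) else 0)
                * (if (v k).1 = a then d k else 0) := Finset.sum_comm
        _ = ∑ a ∈ T, (starRingEnd ℂ) (F a) * F a := by
            refine Finset.sum_congr rfl fun a _ => ?_
            have hconj : (starRingEnd ℂ) (F a)
                = ∑ j, if (v j).1 = a then (starRingEnd ℂ) (d j) else 0 := by
              simp only [hF, map_sum]
              exact Finset.sum_congr rfl fun j _ => by split_ifs <;> simp
            rw [hconj]
            simp only [hF]
            rw [Finset.sum_mul_sum]
        _ = ((∑ a ∈ T, Complex.normSq (F a) : ℝ) : ℂ) := by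
            push_cast
            exact Finset.sum_congr rfl fun a _ =>
              Complex.normSq_eq_conj_mul_self.symm
    rw [main]
    refine ⟨?_, Complex.ofReal_im _⟩
    rw [Complex.ofReal_re]
    exact Finset.sum_nonneg fun a _ => Complex.normSq_nonneg _
end

section
/- With U(x,λ) = W(λδ_x, 0) and the regularized field φ_λ(x) := (1/(2iλ))(U(x,λ) − U(x,λ)*) for λ > 0, the polymer state ω₀ of the previous context satisfies ω₀(φ_λ(x) φ_{λ'}(x')) = (1/(2λ²))(𝟙[λ = λ'] + 𝟙[λ = −λ']) 𝟙[x = x'] and in particular ω₀(φ_λ(x) φ_{λ'}(x')) = 0 whenever x ≠ x' or |λ| ≠ |λ'|. -/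
/-! Since `U(x,λ)* = U(x,-λ)` and `ω₀` is even, the four terms of `ω₀(φ_λ(x) φ_{λ'}(x'))` pair up
into `2 (ω₀(W(λδ_x + λ'δ_{x'}, 0)) - ω₀(W(λδ_x - λ'δ_{x'}, 0)))`. For `x ≠ x'` both states vanish
unless `λ = λ' = 0`, so they cancel; for `x = x'` they are `𝟙[λ = -λ']` and `𝟙[λ = λ']`. -/

open Classical

/-- The polymer state on Weyl generators with trivial second slot:
`Ω(a) = ω₀(W(a,0)) = 1` if `a = 0`, else `0`. -/

noncomputable def polymerOmega {S : Type*} (a : S →₀ ℝ) : ℂ :=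
  if a = 0 then 1 else 0

section PolymerOmega

variable {S : Type*}

theorem polymerOmega_neg (a : S →₀ ℝ) : polymerOmega (-a) = polymerOmega a := by
  simp only [polymerOmega, neg_eq_zero]

theorem polymerOmega_add_sub_neg_add_add_neg_sub (a b : S →₀ ℝ) :
    polymerOmega (a + b) - polymerOmega (a - b) - polymerOmega (-a + b) + polymerOmega (-a - b)
      = 2 * (polymerOmega (a + b) - polymerOmega (a - b)) := by
  rw [show -a + b = -(a - b) by abel, show -a - b = -(a + b) by abel,
    polymerOmega_neg, polymerOmega_neg]
  ring

theorem polymerOmega_sub (a b : S →₀ ℝ) : polymerOmega (a - b) = if a = b then 1 else 0 := by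
  simp only [polymerOmega, sub_eq_zero]

theorem polymerOmega_single_add_single_sub [DecidableEq S] (x x' : S) (lam lam' : ℝ) :
    polymerOmega (Finsupp.single x lam + Finsupp.single x' lam')
        - polymerOmega (Finsupp.single x lam - Finsupp.single x' lam')
      = if x = x' then (if lam = -lam' then 1 else 0) - (if lam = lam' then 1 else 0) else 0 := by
  rw [← sub_neg_eq_add, ← Finsupp.single_neg, polymerOmega_sub, polymerOmega_sub]
  by_cases hx : x = x'
  · subst hx
    simp only [(Finsupp.single_injective x).eq_iff, if_true]
  · simp only [Finsupp.single_eq_single_iff, hx, false_and, false_or, neg_eq_zero, if_false, sub_self]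

end PolymerOmega

theorem regularized_two_point_coeff (lam lam' : ℝ) :
    (1 / (2 * Complex.I * (lam : ℂ))) * (1 / (2 * Complex.I * (lam' : ℂ))) *
        (2 * ((if lam = -lam' then 1 else 0) - (if lam = lam' then 1 else 0)))
      = 1 / (2 * (lam : ℂ) ^ 2) * ((if lam = lam' then 1 else 0) + (if lam = -lam' then 1 else 0)) := by
  rcases eq_or_ne lam 0 with rfl | hlam
  · simp -- both sides vanish through `1 / 0 = 0`
  have hlamC : (lam : ℂ) ≠ 0 := Complex.ofReal_ne_zero.mpr hlam
  by_cases heq : lam = lam'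
  · subst heq
    have hne_neg : lam ≠ -lam := fun h => hlam (by linarith)
    simp only [if_neg hne_neg, if_true]
    field_simp
    linear_combination -Complex.I_sq
  by_cases hneg : lam = -lam'
  · obtain rfl : lam' = -lam := by linarith
    simp only [neg_neg, if_true, if_neg heq, Complex.ofReal_neg]
    field_simp
    linear_combination -Complex.I_sq
  · simp [heq, hneg]

theorem regularized_two_point_eq {S : Type*} [DecidableEq S] (x x' : S) (lam lam' : ℝ) :
    (1 / (2 * Complex.I * (lam : ℂ))) * (1 / (2 * Complex.I * (lam' : ℂ))) *
        (polymerOmega (Finsupp.single x lam + Finsupp.single x' lam')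
          - polymerOmega (Finsupp.single x lam - Finsupp.single x' lam')
          - polymerOmega (-Finsupp.single x lam + Finsupp.single x' lam')
          + polymerOmega (-Finsupp.single x lam - Finsupp.single x' lam'))
      = (1 / (2 * (lam : ℂ) ^ 2)) *
          ((if lam = lam' then 1 else 0) + (if lam = -lam' then 1 else 0)) *
          (if x = x' then 1 else 0) := by
  rw [polymerOmega_add_sub_neg_add_add_neg_sub, polymerOmega_single_add_single_sub]
  by_cases hx : x = x'
  · rw [if_pos hx, if_pos hx, mul_one, regularized_two_point_coeff]
  · simp [hx]

theorem polymer_regularized_two_point_general {S : Type*} [DecidableEq S]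
    (x x' : S) (lam lam' : ℝ) :
    ((1 / (2 * Complex.I * (lam : ℂ))) * (1 / (2 * Complex.I * (lam' : ℂ))) *
        (polymerOmega (Finsupp.single x lam + Finsupp.single x' lam')
          - polymerOmega (Finsupp.single x lam - Finsupp.single x' lam')
          - polymerOmega (-Finsupp.single x lam + Finsupp.single x' lam')
          + polymerOmega (-Finsupp.single x lam - Finsupp.single x' lam'))
      = (1 / (2 * (lam : ℂ) ^ 2)) *
          ((if lam = lam' then 1 else 0) + (if lam = -lam' then 1 else 0)) *
          (if x = x' then 1 else 0)) ∧
    ((x ≠ x' ∨ |lam| ≠ |lam'|) →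
      (1 / (2 * Complex.I * (lam : ℂ))) * (1 / (2 * Complex.I * (lam' : ℂ))) *
        (polymerOmega (Finsupp.single x lam + Finsupp.single x' lam')
          - polymerOmega (Finsupp.single x lam - Finsupp.single x' lam')
          - polymerOmega (-Finsupp.single x lam + Finsupp.single x' lam')
          + polymerOmega (-Finsupp.single x lam - Finsupp.single x' lam')) = 0) := by
  refine ⟨regularized_two_point_eq x x' lam lam', fun hne => ?_⟩
  rw [regularized_two_point_eq]
  rcases hne with hx | habs
  · simp [hx]
  · rw [Ne, abs_eq_abs, not_or] at habs
    simp [habs.1, habs.2]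

/-- With point-holonomies `U(x,λ) = W(λδ_x, 0)`, `U(x,λ)* = U(x,−λ)`,
`U(x,λ)U(x',λ') = W(λδ_x + λ'δ_{x'}, 0)` (the Weyl phase vanishes), and the
regularized field `φ_λ(x) = (1/(2iλ))(U(x,λ) − U(x,λ)*)` for `λ > 0`, the
polymer state `ω₀` satisfies
`ω₀(φ_λ(x)φ_{λ'}(x')) = (1/(2λ²))(𝟙[λ=λ'] + 𝟙[λ=−λ']) 𝟙[x=x']`;
in particular it vanishes whenever `x ≠ x'` or `|λ| ≠ |λ'|`. -/
theorem polymer_regularized_two_point {S : Type*} [DecidableEq S]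
    (x x' : S) (lam lam' : ℝ) (hlam : 0 < lam) (hlam' : 0 < lam') :
    ((1 / (2 * Complex.I * (lam : ℂ))) * (1 / (2 * Complex.I * (lam' : ℂ))) *
        (polymerOmega (Finsupp.single x lam + Finsupp.single x' lam')
          - polymerOmega (Finsupp.single x lam - Finsupp.single x' lam')
          - polymerOmega (-Finsupp.single x lam + Finsupp.single x' lam')
          + polymerOmega (-Finsupp.single x lam - Finsupp.single x' lam'))
      = (1 / (2 * (lam : ℂ) ^ 2)) *
          ((if lam = lam' then 1 else 0) + (if lam = -lam' then 1 else 0)) *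
          (if x = x' then 1 else 0)) ∧
    ((x ≠ x' ∨ |lam| ≠ |lam'|) →
      (1 / (2 * Complex.I * (lam : ℂ))) * (1 / (2 * Complex.I * (lam' : ℂ))) *
        (polymerOmega (Finsupp.single x lam + Finsupp.single x' lam')
          - polymerOmega (Finsupp.single x lam - Finsupp.single x' lam')
          - polymerOmega (-Finsupp.single x lam + Finsupp.single x' lam')
          + polymerOmega (-Finsupp.single x lam - Finsupp.single x' lam')) = 0) :=
  polymer_regularized_two_point_general x x' lam lam'
end
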